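/- arXiv:math/9507215 — 4 statements merged into one kernel-verified Lean document; each statement's English description precedes it below -/
import Mathlib

section
/- Let X be a Banach space, T : X → X a bounded linear operator, x₀* ∈ X* and x₀ ∈ X with Re x₀*(x₀) = ‖x₀*‖ = ‖x₀‖ = 1, and suppose x₀* is a weak* strongly exposed point of the dual unit ball exposed by x₀: whenever (x_n*) ⊆ B_{X*} with Re x_n*(x₀) → 1, then ‖x_n* − x₀*‖ → 0. Define T(x) = x₀*(x)·x₀. Then ‖Id − T‖ < 1 + ‖T‖ = 2; in particular T fails the Daugavet equation for Id − T. -/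
open scoped Topology
open Filter

/-- If `‖z‖ ≤ 1` and `re z → 1` then `z → 1`. -/
private lemma re_tendsto_one {𝕜 : Type*} [RCLike 𝕜] (z : ℕ → 𝕜)
    (hb : ∀ n, ‖z n‖ ≤ 1)
    (h : Tendsto (fun n => RCLike.re (z n)) atTop (𝓝 1)) :
    Tendsto z atTop (𝓝 (1 : 𝕜)) := by
  rw [tendsto_iff_norm_sub_tendsto_zero]
  have hsq : Tendsto (fun n => ‖z n - 1‖ ^ 2) atTop (𝓝 0) := by
    have hub : Tendsto (fun n => 2 - 2 * RCLike.re (z n)) atTop (𝓝 0) := by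
      have := h.const_mul (2 : ℝ)
      have h2 := (tendsto_const_nhds (x := (2:ℝ)) (f := atTop)).sub this
      simpa using h2
    refine tendsto_of_tendsto_of_tendsto_of_le_of_le tendsto_const_nhds hub
      (fun n => by positivity) (fun n => ?_)
    have h1 : ‖z n - 1‖ ^ 2 = RCLike.re (z n - 1) * RCLike.re (z n - 1)
        + RCLike.im (z n - 1) * RCLike.im (z n - 1) := RCLike.norm_sq_eq_def
    have h2 : ‖z n‖ ^ 2 = RCLike.re (z n) * RCLike.re (z n)
        + RCLike.im (z n) * RCLike.im (z n) := RCLike.norm_sq_eq_def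
    have h3 : ‖z n‖ ^ 2 ≤ 1 := by
      have := hb n
      nlinarith [norm_nonneg (z n)]
    simp only [map_sub, RCLike.one_re, RCLike.one_im] at h1
    nlinarith
  have : Tendsto (fun n => Real.sqrt (‖z n - 1‖ ^ 2)) atTop (𝓝 (Real.sqrt 0)) :=
    (Real.continuous_sqrt.tendsto 0).comp hsq
  simpa [Real.sqrt_sq (norm_nonneg _)] using this

/-- If `x₀*` is a weak* strongly exposed point of the dual unit ball,
exposed by `x₀`, then the rank-one operator `T x = x₀*(x) • x₀` satisfies
`‖T‖ = 1` and `‖Id - T‖ < 2`, i.e. `Id - T` fails the Daugavet equation. -/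
theorem rank_one_strongly_exposed_fails_daugavet {𝕜 X : Type*} [RCLike 𝕜]
    [NormedAddCommGroup X] [NormedSpace 𝕜 X] [CompleteSpace X]
    (x₀' : X →L[𝕜] 𝕜) (x₀ : X)
    (hre : RCLike.re (x₀' x₀) = 1) (hn' : ‖x₀'‖ = 1) (hn : ‖x₀‖ = 1)
    (hexp : ∀ f : ℕ → (X →L[𝕜] 𝕜), (∀ n, ‖f n‖ ≤ 1) →
      Tendsto (fun n => RCLike.re (f n x₀)) atTop (𝓝 1) →
      Tendsto (fun n => ‖f n - x₀'‖) atTop (𝓝 0)) :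
    ‖x₀'.smulRight x₀‖ = 1 ∧ ‖(1 : X →L[𝕜] X) - x₀'.smulRight x₀‖ < 2 := by
  have hT : ‖x₀'.smulRight x₀‖ = 1 := by
    rw [ContinuousLinearMap.norm_smulRight_apply, hn', hn, one_mul]
  refine ⟨hT, ?_⟩
  by_contra hcon
  push_neg at hcon
  set A : X →L[𝕜] X := (1 : X →L[𝕜] X) - x₀'.smulRight x₀ with hA
  -- extract a sequence almost attaining the norm
  have key : ∀ n : ℕ, ∃ x : X, ∃ g : X →L[𝕜] 𝕜, ‖x‖ ≤ 1 ∧ ‖g‖ = 1 ∧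
      2 - 1 / (n + 1) < ‖A x‖ ∧ g (A x) = (‖A x‖ : 𝕜) := by
    intro n
    have hlt : 2 - 1 / ((n : ℝ) + 1) < ‖A‖ := by
      have : (0:ℝ) < 1 / ((n : ℝ) + 1) := by positivity
      linarith
    obtain ⟨x, hx1, hx2⟩ := A.exists_lt_apply_of_lt_opNorm hlt
    have hAx : A x ≠ 0 := by
      intro h0
      rw [h0, norm_zero] at hx2
      have h1 : 1 / ((n : ℝ) + 1) ≤ 1 := by
        rw [div_le_one (by positivity)]
        linarith [Nat.cast_nonneg (α := ℝ) n]
      linarith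
    obtain ⟨g, hg1, hg2⟩ := exists_dual_vector 𝕜 (A x) (norm_ne_zero_iff.mpr hAx)
    exact ⟨x, g, hx1.le, hg1, hx2, hg2⟩
  choose x g hx hg hlt hgA using key
  -- notation
  set a : ℕ → 𝕜 := fun n => x₀' (x n) with ha
  set b : ℕ → 𝕜 := fun n => g n x₀ with hb
  have hAx : ∀ n, A (x n) = x n - a n • x₀ := fun n => by
    simp [hA, ContinuousLinearMap.smulRight_apply]; rfl
  have hsplit : ∀ n, g n (x n) - a n * b n = (‖A (x n)‖ : 𝕜) := by
    intro n
    have := hgA n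
    nth_rewrite 1 [hAx n] at this
    simpa [mul_comm, map_sub, map_smul, smul_eq_mul] using this
  -- bounds
  have hga_le : ∀ n, ‖g n (x n)‖ ≤ 1 := fun n => by
    calc ‖g n (x n)‖ ≤ ‖g n‖ * ‖x n‖ := (g n).le_opNorm _
    _ ≤ 1 := by rw [hg n, one_mul]; exact hx n
  have ha_le : ∀ n, ‖a n‖ ≤ 1 := fun n => by
    calc ‖a n‖ ≤ ‖x₀'‖ * ‖x n‖ := x₀'.le_opNorm _
    _ ≤ 1 := by rw [hn', one_mul]; exact hx n
  have hb_le : ∀ n, ‖b n‖ ≤ 1 := fun n => by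
    calc ‖b n‖ ≤ ‖g n‖ * ‖x₀‖ := (g n).le_opNorm _
    _ = 1 := by rw [hg n, hn, one_mul]
  have hab_le : ∀ n, ‖a n * b n‖ ≤ 1 := fun n => by
    rw [norm_mul]
    exact mul_le_one₀ (ha_le n) (norm_nonneg _) (hb_le n)
  -- the real-part identity
  have hre_split : ∀ n, RCLike.re (g n (x n)) - RCLike.re (a n * b n) = ‖A (x n)‖ := by
    intro n
    have := congrArg RCLike.re (hsplit n)
    simpa [map_sub] using this
  have haux : Tendsto (fun n : ℕ => 1 - 1 / ((n : ℝ) + 1)) atTop (𝓝 1) := by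
    have := tendsto_one_div_add_atTop_nhds_zero_nat (𝕜 := ℝ)
    have h2 := (tendsto_const_nhds (x := (1:ℝ)) (f := atTop)).sub this
    simpa using h2
  -- re (g n (x n)) → 1
  have hre_g : Tendsto (fun n => RCLike.re (g n (x n))) atTop (𝓝 1) := by
    refine tendsto_of_tendsto_of_tendsto_of_le_of_le haux tendsto_const_nhds
      (fun n => ?_) (fun n => ?_)
    · have h1 := hre_split n
      have h2 : RCLike.re (a n * b n) ≤ 1 := (RCLike.re_le_norm _).trans (hab_le n)
      have h3 := hlt n
      have h4 : -RCLike.re (a n * b n) ≤ 1 := by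
        have := (RCLike.abs_re_le_norm (a n * b n)).trans (hab_le n)
        cases abs_le.mp this; linarith
      linarith
    · exact (RCLike.re_le_norm _).trans (hga_le n)
  -- re (a n * b n) → -1, i.e. re (-(a n * b n)) → 1
  have hre_ab : Tendsto (fun n => RCLike.re (-(a n * b n))) atTop (𝓝 1) := by
    refine tendsto_of_tendsto_of_tendsto_of_le_of_le haux tendsto_const_nhds
      (fun n => ?_) (fun n => ?_)
    · have h1 := hre_split n
      have h3 := hlt n
      have h2 : RCLike.re (g n (x n)) ≤ 1 := (RCLike.re_le_norm _).trans (hga_le n)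
      rw [map_neg]
      linarith
    · rw [map_neg]
      have := (RCLike.abs_re_le_norm (a n * b n)).trans (hab_le n)
      cases abs_le.mp this with
      | intro h1 h2 => linarith
  -- limits in 𝕜
  have hgx_lim : Tendsto (fun n => g n (x n)) atTop (𝓝 (1 : 𝕜)) :=
    re_tendsto_one _ hga_le hre_g
  have hab_lim : Tendsto (fun n => a n * b n) atTop (𝓝 (-1 : 𝕜)) := by
    have := re_tendsto_one (fun n => -(a n * b n)) (fun n => by simpa using hab_le n) hre_ab
    have h2 := this.neg
    simpa using h2
  -- ‖a n‖ → 1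
  have hna_lim : Tendsto (fun n => ‖a n‖) atTop (𝓝 1) := by
    have h1 : Tendsto (fun n => ‖a n * b n‖) atTop (𝓝 1) := by
      simpa using hab_lim.norm
    refine tendsto_of_tendsto_of_tendsto_of_le_of_le h1 tendsto_const_nhds
      (fun n => ?_) (fun n => ha_le n)
    rw [norm_mul]
    calc ‖a n‖ * ‖b n‖ ≤ ‖a n‖ * 1 := by
          exact mul_le_mul_of_nonneg_left (hb_le n) (norm_nonneg _)
      _ = ‖a n‖ := mul_one _
  -- the perturbed functionals
  set h : ℕ → (X →L[𝕜] 𝕜) := fun n => (-(a n)) • g n with hh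
  have hh_le : ∀ n, ‖h n‖ ≤ 1 := fun n => by
    have e : h n = (-(a n)) • g n := by rw [hh]
    rw [e, norm_smul (-(a n)) (g n), norm_neg, hg n, mul_one]
    exact ha_le n
  have hh_x₀ : ∀ n, h n x₀ = -(a n * b n) := fun n => by
    simp [hh, hb, smul_eq_mul]
  have hh_re : Tendsto (fun n => RCLike.re (h n x₀)) atTop (𝓝 1) := by
    simp only [hh_x₀]
    exact hre_ab
  have hdist := hexp h hh_le hh_re
  -- h n (x n) - a n → 0
  have hclose : Tendsto (fun n => h n (x n) - a n) atTop (𝓝 0) := by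
    rw [tendsto_zero_iff_norm_tendsto_zero]
    refine tendsto_of_tendsto_of_tendsto_of_le_of_le tendsto_const_nhds hdist
      (fun n => norm_nonneg _) (fun n => ?_)
    calc ‖h n (x n) - a n‖ = ‖(h n - x₀') (x n)‖ := by simp [ha]
      _ ≤ ‖h n - x₀'‖ * ‖x n‖ := (h n - x₀').le_opNorm _
      _ ≤ ‖h n - x₀'‖ * 1 := by
          exact mul_le_mul_of_nonneg_left (hx n) (norm_nonneg _)
      _ = ‖h n - x₀'‖ := mul_one _
  -- but h n (x n) - a n = -(a n * (g n (x n) + 1)) whose norm tends to 2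
  have heq : ∀ n, h n (x n) - a n = -(a n * (g n (x n) + 1)) := fun n => by
    simp [hh, smul_eq_mul]; ring
  have hnorm2 : Tendsto (fun n => ‖h n (x n) - a n‖) atTop (𝓝 2) := by
    have h1 : Tendsto (fun n => ‖g n (x n) + 1‖) atTop (𝓝 2) := by
      have := (hgx_lim.add (tendsto_const_nhds (x := (1:𝕜)))).norm
      have h2 : ‖(1 : 𝕜) + 1‖ = 2 := by
        norm_num
      rwa [h2] at this
    have := hna_lim.mul h1
    rw [one_mul] at this
    refine this.congr fun n => ?_
    rw [heq n, norm_neg, norm_mul]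
  have h0 : Tendsto (fun n => ‖h n (x n) - a n‖) atTop (𝓝 0) := by
    simpa using hclose.norm
  have : (0 : ℝ) = 2 := tendsto_nhds_unique h0 hnorm2
  norm_num at this
end

section
/- Let E be a Banach space and let {p_s : s ∈ S} ⊆ E be a family of norm-one vectors such that for each s, span{p_s} is an L-summand in E with L-projection Π_s, and suppose Π_s ≠ Π_t for s ≠ t in a finite set {t₁,…,t_k}. Then p_{t₁}, …, p_{t_k} are linearly independent. -/
/-- If each `span{p_s}` is an L-summand via the L-projection
`Π_s ξ = π_s(ξ) • p_s` with `‖p_s‖ = 1`, and `Π_{t i} ≠ Π_{t j}` for `i ≠ j`,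
then `p_{t 1}, …, p_{t k}` are linearly independent. -/
theorem linearIndependent_of_distinct_Lprojections {𝕜 E S : Type*} [RCLike 𝕜]
    [NormedAddCommGroup E] [NormedSpace 𝕜 E] [CompleteSpace E]
    (p : S → E) (hp : ∀ s, ‖p s‖ = 1)
    (π : S → (E →L[𝕜] 𝕜)) (hπp : ∀ s, π s (p s) = 1)
    (hL : ∀ s, ∀ ξ : E, ‖ξ‖ = ‖π s ξ • p s‖ + ‖ξ - π s ξ • p s‖)
    (k : ℕ) (t : Fin k → S)
    (hdist : ∀ i j, i ≠ j →
      (π (t i)).smulRight (p (t i)) ≠ (π (t j)).smulRight (p (t j))) :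
    LinearIndependent 𝕜 (fun j : Fin k => p (t j)) := by
  set P : Fin k → (E →L[𝕜] E) := fun i => (π (t i)).smulRight (p (t i)) with hP
  have hPapp : ∀ i ξ, P i ξ = π (t i) ξ • p (t i) := fun i ξ => rfl
  have hpne : ∀ s, p s ≠ 0 := by
    intro s h
    have := hp s
    rw [h, norm_zero] at this
    exact zero_ne_one this
  have hproj : ∀ i, IsLprojection E (P i) := by
    intro i
    refine ⟨?_, ?_⟩
    · ext ξ
      simp only [ContinuousLinearMap.mul_apply, hPapp, map_smul, hπp, smul_smul,
        smul_eq_mul, mul_one]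
    · intro x
      have h1 : (1 - P i) • x = x - π (t i) x • p (t i) := by
        simp [hPapp, sub_smul]
      have h0 : (P i) • x = π (t i) x • p (t i) := rfl
      rw [h1, h0]
      exact hL (t i) x
  -- key: π (t i) (p (t j)) = 0 for i ≠ j
  have key : ∀ i j, i ≠ j → π (t i) (p (t j)) = 0 := by
    intro i j hij
    by_contra ha
    set a := π (t i) (p (t j)) with haa
    set b := π (t j) (p (t i)) with hbb
    have hcomm := (hproj i).commute (hproj j)
    have hc : ∀ ξ, (π (t j) ξ * a) • p (t i) = (π (t i) ξ * b) • p (t j) := by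
      intro ξ
      have h := congrArg (fun f : E →L[𝕜] E => f ξ) hcomm.eq
      simp only [ContinuousLinearMap.mul_apply, hPapp, map_smul, smul_smul,
        smul_eq_mul, ← haa, ← hbb] at h
      exact h
    have hpi : p (t i) = b • p (t j) := by
      have h1 := hc (p (t j))
      rw [hπp, one_mul] at h1
      have h2 := congrArg (fun x : E => a⁻¹ • x) h1
      simpa [← haa, smul_smul, inv_mul_cancel₀ ha, inv_mul_cancel_left₀ ha, mul_assoc] using h2
    have hbne : b ≠ 0 := by
      intro h
      rw [h, zero_smul] at hpi
      exact hpne _ hpi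
    have hs : ∀ ξ, π (t j) ξ * a = π (t i) ξ := by
      intro ξ
      have h1 := hc ξ
      rw [hpi, smul_smul] at h1
      have h2 : π (t j) ξ * a * b = π (t i) ξ * b :=
        smul_left_injective 𝕜 (hpne (t j)) h1
      exact mul_right_cancel₀ hbne h2
    have hab : a * b = 1 := by
      have h2 := hs (p (t i))
      rw [hπp, ← hbb] at h2
      rw [mul_comm]; exact h2
    have hPeq : P i = P j := by
      ext ξ
      rw [hPapp, hPapp, hpi, smul_smul, ← hs ξ, mul_assoc, hab, mul_one]
    exact hdist i j hij hPeq
  rw [Fintype.linearIndependent_iff]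
  intro g hg i
  have hsum0 := congrArg (π (t i)) hg
  rw [map_sum, map_zero] at hsum0
  have hsum : ∀ j, π (t i) (g j • p (t j)) = if j = i then g j else 0 := by
    intro j
    rw [map_smul, smul_eq_mul]
    by_cases h : j = i
    · subst h; rw [hπp, mul_one, if_pos rfl]
    · rw [key i j (Ne.symm h), mul_zero, if_neg h]
  rw [Finset.sum_congr rfl (fun j _ => hsum j)] at hsum0
  simpa using hsum0
end

section
/- Let X be a Banach space, T : X → X a bounded linear operator, and suppose that for every ε > 0 there exists x* ∈ X* with ‖x*‖ = 1, ‖T* x*‖ > ‖T‖ − ε, and a decomposition via an L-projection Π with one-dimensional range span{x*}, Π(ξ) = π(ξ) x*, such that |1 + π(T* x*)| ≥ 1 + |π(T* x*)| − ε. Then ‖Id + T‖ = 1 + ‖T‖. -/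
open NormedSpace

/-- If for every `ε > 0` there is a norm-one functional `p ∈ X*` spanning
an L-summand of `X*` (via `ξ ↦ π(ξ) • p`, `π(p) = 1`) such that `q := T* p` satisfies
`‖q‖ > ‖T‖ - ε` and `|1 + π q| ≥ 1 + |π q| - ε`, then `‖Id + T‖ = 1 + ‖T‖`. -/
theorem daugavet_of_L_summand_criterion {𝕜 X : Type*} [RCLike 𝕜]
    [NormedAddCommGroup X] [NormedSpace 𝕜 X] [CompleteSpace X] (T : X →L[𝕜] X)
    (h : ∀ ε : ℝ, 0 < ε → ∃ (p : StrongDual 𝕜 X) (π : StrongDual 𝕜 X →L[𝕜] 𝕜),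
      ‖p‖ = 1 ∧ π p = 1 ∧
      (∀ ξ : StrongDual 𝕜 X, ‖ξ‖ = ‖π ξ‖ + ‖ξ - π ξ • p‖) ∧
      ‖p.comp T‖ > ‖T‖ - ε ∧
      ‖1 + π (p.comp T)‖ ≥ 1 + ‖π (p.comp T)‖ - ε) :
    ‖(1 : X →L[𝕜] X) + T‖ = 1 + ‖T‖ := by
  have hub : ‖(1 : X →L[𝕜] X) + T‖ ≤ 1 + ‖T‖ := by
    refine le_trans (norm_add_le _ _) ?_
    have h1 : ‖(1 : X →L[𝕜] X)‖ ≤ 1 := ContinuousLinearMap.norm_id_le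
    linarith
  refine le_antisymm hub ?_
  refine le_of_forall_pos_le_add fun ε hε => ?_
  obtain ⟨p, π, hp, hπp, hL, hq, hπq⟩ := h (ε / 2) (by positivity)
  set q := p.comp T with hqdef
  have h1 : p + q = p.comp ((1 : X →L[𝕜] X) + T) := by
    ext x
    simp [hqdef]
  have h2 : ‖p + q‖ ≤ ‖(1 : X →L[𝕜] X) + T‖ := by
    rw [h1]
    calc ‖p.comp ((1 : X →L[𝕜] X) + T)‖ ≤ ‖p‖ * ‖(1 : X →L[𝕜] X) + T‖ :=
          ContinuousLinearMap.opNorm_comp_le _ _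
      _ = ‖(1 : X →L[𝕜] X) + T‖ := by rw [hp, one_mul]
  have h3 : ‖p + q‖ = ‖1 + π q‖ + ‖q - π q • p‖ := by
    have := hL (p + q)
    rw [map_add, hπp] at this
    have hv : p + q - (1 + π q) • p = q - π q • p := by
      ext x
      simp only [ContinuousLinearMap.sub_apply, ContinuousLinearMap.add_apply, ContinuousLinearMap.smul_apply, smul_eq_mul]
      ring
    rwa [hv] at this
  have h4 : ‖q‖ = ‖π q‖ + ‖q - π q • p‖ := hL q
  have h5 : ‖1 + π q‖ ≥ 1 + ‖π q‖ - ε / 2 := hπq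
  have h6 : ‖q‖ > ‖T‖ - ε / 2 := hq
  linarith
end

section
/- Let X be a complex Banach space and T ∈ L(X). If for every ε > 0 the dual X* admits a norm-one functional p such that span{p} is an L-summand (with projection ξ ↦ π(ξ)p) and ‖T*p‖ > ‖T‖ − ε, then there exists λ ∈ ℂ with |λ| = 1 such that ‖Id + λT‖ = 1 + ‖T‖. -/
open NormedSpace

/-- Corollary 2.1a: If for every `ε > 0` there is a norm-one functional
`p ∈ X*` spanning an L-summand of `X*` (via `ξ ↦ π(ξ) • p`, `π(p) = 1`) with
`‖T* p‖ > ‖T‖ - ε`, then some unimodular multiple `λT` of `T` satisfies the Daugavet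
equation `‖Id + λT‖ = 1 + ‖T‖`. -/
theorem exists_unimodular_daugavet {X : Type*}
    [NormedAddCommGroup X] [NormedSpace ℂ X] [CompleteSpace X] (T : X →L[ℂ] X)
    (h : ∀ ε : ℝ, 0 < ε → ∃ (p : StrongDual ℂ X) (π : StrongDual ℂ X →L[ℂ] ℂ),
      ‖p‖ = 1 ∧ π p = 1 ∧
      (∀ ξ : StrongDual ℂ X, ‖ξ‖ = ‖π ξ‖ + ‖ξ - π ξ • p‖) ∧
      ‖p.comp T‖ > ‖T‖ - ε) :
    ∃ lam : ℂ, ‖lam‖ = 1 ∧ ‖(1 : X →L[ℂ] X) + lam • T‖ = 1 + ‖T‖ := by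
  -- X is nontrivial since its dual has a norm-one element
  obtain ⟨p₀, _, hp₀1, -, -, -⟩ := h 1 one_pos
  have hXnt : Nontrivial X := by
    by_contra hn
    rw [not_nontrivial_iff_subsingleton] at hn
    have : p₀ = 0 := Subsingleton.elim _ _
    rw [this, norm_zero] at hp₀1
    exact one_ne_zero hp₀1.symm
  -- key estimate
  have key : ∀ ε : ℝ, 0 < ε → ∃ lam : ℂ, ‖lam‖ = 1 ∧
      1 + ‖T‖ - ε ≤ ‖(1 : X →L[ℂ] X) + lam • T‖ := by
    intro ε hε
    obtain ⟨p, π, hp1, hπp, hL, hT⟩ := h ε hε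
    set q : StrongDual ℂ X := p.comp T with hqdef
    set c : ℂ := π q with hcdef
    obtain ⟨lam, hlam1, hlamc⟩ : ∃ lam : ℂ, ‖lam‖ = 1 ∧ lam * c = (‖c‖ : ℂ) := by
      rcases eq_or_ne c 0 with hc | hc
      · exact ⟨1, by simp, by simp [hc]⟩
      · refine ⟨(starRingEnd ℂ) c / ‖c‖, ?_, ?_⟩
        · rw [norm_div, RCLike.norm_conj, Complex.norm_real, norm_norm]
          exact div_self (norm_ne_zero_iff.mpr hc)
        · have hcn : (‖c‖ : ℂ) ≠ 0 :=
            Complex.ofReal_ne_zero.mpr (norm_ne_zero_iff.mpr hc)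
          rw [div_mul_eq_mul_div, mul_comm, Complex.mul_conj, Complex.normSq_eq_norm_sq,
            div_eq_iff hcn]
          push_cast
          ring
    refine ⟨lam, hlam1, ?_⟩
    have hcomp : p.comp ((1 : X →L[ℂ] X) + lam • T) = p + lam • q := by
      ext x; simp [hqdef]
    have h1 : ‖p + lam • q‖ ≤ ‖(1 : X →L[ℂ] X) + lam • T‖ := by
      calc ‖p + lam • q‖ = ‖p.comp ((1 : X →L[ℂ] X) + lam • T)‖ := by rw [hcomp]
        _ ≤ ‖p‖ * ‖(1 : X →L[ℂ] X) + lam • T‖ := ContinuousLinearMap.opNorm_comp_le _ _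
        _ = ‖(1 : X →L[ℂ] X) + lam • T‖ := by rw [hp1, one_mul]
    have hq : ‖q‖ = ‖c‖ + ‖q - c • p‖ := hL q
    have hπval : π (p + lam • q) = 1 + lam * c := by
      simp [hπp, smul_eq_mul, hcdef]
    have hrest : (p + lam • q) - π (p + lam • q) • p = lam • (q - c • p) := by
      rw [hπval]; module
    have hnorm1 : ‖(1 : ℂ) + lam * c‖ = 1 + ‖c‖ := by
      rw [hlamc]
      have : (1 : ℂ) + (‖c‖ : ℂ) = ((1 + ‖c‖ : ℝ) : ℂ) := by push_cast; ring
      rw [this, Complex.norm_real]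
      exact abs_of_nonneg (by positivity)
    have hpq : ‖p + lam • q‖ = 1 + ‖q‖ := by
      rw [hL (p + lam • q), hrest, hπval, hnorm1, norm_smul, hlam1, one_mul]
      linarith [hq]
    have h2 : ‖T‖ - ε < ‖q‖ := hT
    linarith [h1, hpq.symm.le]
  -- compactness argument on the unit circle
  have hcpt : IsCompact (Metric.sphere (0 : ℂ) 1) := isCompact_sphere 0 1
  have hcont : Continuous fun lam : ℂ => ‖(1 : X →L[ℂ] X) + lam • T‖ :=
    (continuous_const.add (continuous_id.smul continuous_const)).norm
  obtain ⟨lam, hlamS, hmax⟩ := hcpt.exists_isMaxOn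
    ⟨1, by simp⟩ hcont.continuousOn
  have hlam1 : ‖lam‖ = 1 := by simpa using mem_sphere_zero_iff_norm.mp hlamS
  refine ⟨lam, hlam1, le_antisymm ?_ ?_⟩
  · calc ‖(1 : X →L[ℂ] X) + lam • T‖ ≤ ‖(1 : X →L[ℂ] X)‖ + ‖lam • T‖ := norm_add_le _ _
      _ = 1 + ‖T‖ := by rw [norm_one, norm_smul lam T, hlam1, one_mul]
  · refine le_of_forall_pos_le_add ?_
    intro ε hε
    obtain ⟨lam', hlam'1, hlam'⟩ := key ε hε
    have hmem : lam' ∈ Metric.sphere (0 : ℂ) 1 := mem_sphere_zero_iff_norm.mpr hlam'1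
    have := hmax hmem
    simp only [Set.mem_setOf_eq] at this
    linarith [this]
end
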